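/- The Lorentzian metric g₁ on 𝔢(2) (brackets [F₁,F₂]=F₃, [F₃,F₁]=F₂; g(F₁,F₁)=g(F₂,F₂)=1, g(F₃,F₃)=−1) is an expanding algebraic Ricci soliton: Ric = 2·Id + D where D is the derivation with D(F₁)=0, D(F₂)=−2F₂, D(F₃)=−2F₃. -/
import Mathlib


noncomputable section

/-- The underlying space of the Lie algebra `𝔢(2)` of the Euclidean motion group,
with basis `F₁ = oe 0`, `F₂ = oe 1`, `F₃ = oe 2`. -/
abbrev V3 : Type := Fin 3 → ℝ

def oe (i : Fin 3) : V3 := Pi.single i 1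

/-- Brackets: `[F₁,F₂] = F₃`, `[F₃,F₁] = F₂`, `[F₂,F₃] = 0`. -/
def br (x y : V3) : V3 := fun i =>
  if i = 1 then x 2 * y 0 - x 0 * y 2
  else if i = 2 then x 0 * y 1 - x 1 * y 0
  else 0

/-- The Lorentzian metric `g₁`: `g(F₁,F₁) = g(F₂,F₂) = 1`, `g(F₃,F₃) = −1`. -/
def g1 (x y : V3) : ℝ := x 0 * y 0 + x 1 * y 1 - x 2 * y 2

/-- `D` is a derivation of the bracket. -/
def IsDer (D : V3 →ₗ[ℝ] V3) : Prop :=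
  ∀ x y : V3, D (br x y) = br (D x) y + br x (D y)

/-- Koszul formula for the left-invariant Levi-Civita connection of `g₁`. -/
def Koszul (nab : V3 →ₗ[ℝ] V3 →ₗ[ℝ] V3) : Prop :=
  ∀ x y z : V3, 2 * g1 (nab x y) z = g1 (br x y) z - g1 (br y z) x + g1 (br z x) y

/-- Curvature tensor `R(X,Y)Z = ∇_X∇_Y Z − ∇_Y∇_X Z − ∇_{[X,Y]}Z`. -/
def Rcurv (nab : V3 →ₗ[ℝ] V3 →ₗ[ℝ] V3) (x y z : V3) : V3 :=
  nab x (nab y z) - nab y (nab x z) - nab (br x y) z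

/-- Ricci tensor `Rc(X,Y) = Σᵢ εᵢ g(R(eᵢ,X)Y, eᵢ)` over the pseudo-orthonormal basis. -/
def Rc (nab : V3 →ₗ[ℝ] V3 →ₗ[ℝ] V3) (x y : V3) : ℝ :=
  ∑ i : Fin 3, g1 (oe i) (oe i) * g1 (Rcurv nab (oe i) x y) (oe i)

/- auxiliary -/

def Nf (x y : V3) : V3 := fun i =>
  if i = 0 then -(x 1 * y 2) - x 2 * y 1
  else if i = 1 then x 2 * y 0
  else -(x 1 * y 0)

lemma nab_eq (nab : V3 →ₗ[ℝ] V3 →ₗ[ℝ] V3) (hK : Koszul nab) :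
    ∀ x y : V3, nab x y = Nf x y := by
  intro x y
  funext i
  fin_cases i
  · have h := hK x y (oe 0)
    simp [g1, br, oe, Pi.single_apply, Nf] at h ⊢
    linarith
  · have h := hK x y (oe 1)
    simp [g1, br, oe, Pi.single_apply, Nf] at h ⊢
    linarith
  · have h := hK x y (oe 2)
    simp [g1, br, oe, Pi.single_apply, Nf] at h ⊢
    linarith

lemma Rc_eq (nab : V3 →ₗ[ℝ] V3 →ₗ[ℝ] V3) (hK : Koszul nab) :
    ∀ x y : V3, Rc nab x y = 2 * (x 0 * y 0) := by
  intro x y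
  simp only [Rc, Rcurv, nab_eq nab hK, Fin.sum_univ_three]
  simp [Nf, g1, br, oe, Pi.single_apply]
  ring

def Dmap : V3 →ₗ[ℝ] V3 where
  toFun := fun x i => if i = 0 then 0 else (-2) * x i
  map_add' := by
    intro x y; funext i; by_cases h : i = 0 <;> simp [h] <;> ring
  map_smul' := by
    intro c x; funext i; by_cases h : i = 0 <;> simp [h] <;> ring

lemma Dmap_apply (x : V3) (i : Fin 3) :
    Dmap x i = if i = 0 then 0 else (-2) * x i := rfl

/-- `g₁` on `𝔢(2)` is an algebraic Ricci soliton with (positive) soliton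
constant `c = 2`: `Ric = 2·Id + D` where `D` is the derivation with `D F₁ = 0`,
`D F₂ = −2F₂`, `D F₃ = −2F₃`. -/
theorem e2_g1_solvsoliton (nab : V3 →ₗ[ℝ] V3 →ₗ[ℝ] V3) (hK : Koszul nab)
    (Ric : V3 →ₗ[ℝ] V3) (hRic : ∀ x y : V3, g1 (Ric x) y = Rc nab x y) :
    ∃ D : V3 →ₗ[ℝ] V3, IsDer D ∧
      D (oe 0) = 0 ∧
      D (oe 1) = (-2 : ℝ) • oe 1 ∧
      D (oe 2) = (-2 : ℝ) • oe 2 ∧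
      ∀ x : V3, Ric x = (2 : ℝ) • x + D x := by
  refine ⟨Dmap, ?_, ?_, ?_, ?_, ?_⟩
  · intro x y
    funext i
    fin_cases i <;>
      simp [Dmap_apply, br, Pi.add_apply] <;> ring
  · funext i; fin_cases i <;> simp [Dmap_apply, oe, Pi.single_apply]
  · funext i; fin_cases i <;> simp [Dmap_apply, oe, Pi.single_apply]
  · funext i; fin_cases i <;> simp [Dmap_apply, oe, Pi.single_apply]
  · intro x
    have key : ∀ y : V3, g1 (Ric x) y = g1 ((2 : ℝ) • x + Dmap x) y := by
      intro y
      rw [hRic, Rc_eq nab hK]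
      simp [g1, Dmap_apply, Pi.add_apply, Pi.smul_apply, smul_eq_mul]
      ring
    funext i
    fin_cases i <;>
    · first
      | (have h := key (oe 0)
         simp [g1, oe, Pi.single_apply, Dmap_apply, Pi.add_apply, Pi.smul_apply,
           smul_eq_mul] at h ⊢
         linarith)
      | (have h := key (oe 1)
         simp [g1, oe, Pi.single_apply, Dmap_apply, Pi.add_apply, Pi.smul_apply,
           smul_eq_mul] at h ⊢
         linarith)
      | (have h := key (oe 2)
         simp [g1, oe, Pi.single_apply, Dmap_apply, Pi.add_apply, Pi.smul_apply,
           smul_eq_mul] at h ⊢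
         linarith)
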